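/- arXiv:1708.09686 — 3 statements merged into one kernel-verified Lean document; each statement's English description precedes it below -/
import Mathlib

section
/- If G is connected and B, B' are disjoint bicliques of G, then there exists a path B = B_0, B_1, ..., B_s = B' in KB(G), i.e., a sequence of bicliques in which consecutive ones intersect. -/
open SimpleGraph

variable {V : Type*}

/-- `S` is the vertex set of an induced complete bipartite subgraph of `G`. -/
def IsCompleteBipartiteSet (G : SimpleGraph V) (S : Set V) : Prop :=
  ∃ X Y : Set V, X.Nonempty ∧ Y.Nonempty ∧ S = X ∪ Y ∧ Disjoint X Y ∧
    ∀ a ∈ S, ∀ b ∈ S, (G.Adj a b ↔ ((a ∈ X ∧ b ∈ Y) ∨ (a ∈ Y ∧ b ∈ X)))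

/-- A biclique of `G`: a maximal induced complete bipartite subgraph,
identified with its vertex set. -/
def IsBiclique (G : SimpleGraph V) (S : Set V) : Prop :=
  IsCompleteBipartiteSet G S ∧
    ∀ T : Set V, IsCompleteBipartiteSet G T → S ⊆ T → T = S

/-- The biclique graph `KB(G)`: the intersection graph of the bicliques of `G`. -/
def KB (G : SimpleGraph V) : SimpleGraph {S : Set V // IsBiclique G S} where
  Adj A B := A ≠ B ∧ (A.1 ∩ B.1).Nonempty
  symm := by
    constructor
    intro A B h
    exact ⟨Ne.symm h.1, by rw [Set.inter_comm]; exact h.2⟩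
  loopless := by
    constructor
    intro A h
    exact h.1 rfl

/-- The distance between two bicliques (vertex sets) of `G`:
`min { d_G(b,b') : b ∈ B, b' ∈ B' }`. -/
noncomputable def bicliqueDist (G : SimpleGraph V) (B B' : Set V) : ℕ :=
  sInf {k : ℕ | ∃ b ∈ B, ∃ b' ∈ B', G.dist b b' = k}

lemma exists_biclique_superset {V : Type*} [Fintype V] (G : SimpleGraph V)
    {S : Set V} (hS : IsCompleteBipartiteSet G S) :
    ∃ B, IsBiclique G B ∧ S ⊆ B := by
  classical
  have hfin : {T : Set V | IsCompleteBipartiteSet G T ∧ S ⊆ T}.Finite :=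
    Set.toFinite _
  have hne : {T : Set V | IsCompleteBipartiteSet G T ∧ S ⊆ T}.Nonempty :=
    ⟨S, hS, subset_rfl⟩
  obtain ⟨B, hBmem, hmax'⟩ := hfin.exists_maximal hne
  have hmax : ∀ T ∈ {T : Set V | IsCompleteBipartiteSet G T ∧ S ⊆ T}, B ≤ T → B = T :=
    fun T hT h => le_antisymm h (hmax' hT h)
  refine ⟨B, ⟨hBmem.1, fun T hT hBT => ?_⟩, hBmem.2⟩
  exact (hmax T ⟨hT, hBmem.2.trans hBT⟩ hBT).symm

lemma pair_isCompleteBipartiteSet (G : SimpleGraph V) {a b : V} (hab : G.Adj a b) :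
    IsCompleteBipartiteSet G {a, b} := by
  refine ⟨{a}, {b}, Set.singleton_nonempty a, Set.singleton_nonempty b, Set.insert_eq a {b}, Set.disjoint_singleton.mpr hab.ne, ?_⟩
  intro x hx y hy
  simp only [Set.mem_insert_iff, Set.mem_singleton_iff] at hx hy
  have hne : a ≠ b := hab.ne
  rcases hx with rfl | rfl <;> rcases hy with rfl | rfl
  · simp [G.irrefl, hne]
  · simp [hab]
  · simp [hab.symm, hne.symm]
  · simp [G.irrefl, hne.symm]

lemma biclique_nonempty {V : Type*} [Fintype V] [Nonempty V] (G : SimpleGraph V)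
    {B : Set V} (hB : IsBiclique G B) : B.Nonempty := by
  obtain ⟨X, Y, hX, _, hS, _⟩ := hB.1
  rw [hS]; exact hX.mono Set.subset_union_left

lemma reachable_of_common {V : Type*} (G : SimpleGraph V)
    {A C : {S : Set V // IsBiclique G S}} {a : V} (ha : a ∈ A.1) (hc : a ∈ C.1) :
    (KB G).Reachable A C := by
  by_cases h : A = C
  · subst h; exact Reachable.refl _
  · exact Adj.reachable ⟨h, ⟨a, ha, hc⟩⟩

lemma reachable_of_walk {V : Type*} [Fintype V] (G : SimpleGraph V)
    {a b : V} (p : G.Walk a b)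
    (A : {S : Set V // IsBiclique G S}) (ha : a ∈ A.1)
    (C : {S : Set V // IsBiclique G S}) (hb : b ∈ C.1) :
    (KB G).Reachable A C := by
  induction p generalizing A with
  | nil => exact reachable_of_common G ha hb
  | @cons u x w h p ih =>
    obtain ⟨D, hD, hsub⟩ := exists_biclique_superset G (pair_isCompleteBipartiteSet G h)
    have h1 : (KB G).Reachable A ⟨D, hD⟩ :=
      reachable_of_common G ha (hsub (by simp))
    have h2 : (KB G).Reachable ⟨D, hD⟩ C :=
      ih ⟨D, hD⟩ (hsub (by simp)) hb
    exact h1.trans h2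

/-- If `G` is connected and `B, B'` are disjoint bicliques of `G`, then there is a path
between `B` and `B'` in `KB(G)`, i.e. they are reachable from one another in `KB(G)`. -/
theorem reachable_in_KB_of_disjoint_bicliques
    {V : Type*} [Fintype V] (G : SimpleGraph V) (hG : G.Connected)
    (B B' : Set V) (hB : IsBiclique G B) (hB' : IsBiclique G B')
    (hdisj : Disjoint B B') :
    (KB G).Reachable ⟨B, hB⟩ ⟨B', hB'⟩ := by
  have : Nonempty V := hG.nonempty
  obtain ⟨a, ha⟩ := biclique_nonempty G hB
  obtain ⟨b, hb⟩ := biclique_nonempty G hB'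
  obtain ⟨p⟩ := hG.preconnected a b
  exact reachable_of_walk G p ⟨B, hB⟩ ha ⟨B', hB'⟩ hb
end

section
/- Let G be a connected graph and B, B' bicliques of G with d_G(B, B') = k > 0. Then there exist at least k+1 bicliques of G, each different from B and B', such that each of them is at distance at most k-1 from B and at distance at most k-1 from B'. -/
open SimpleGraph

variable {V : Type*}

namespace BicliqueProof

variable {G : SimpleGraph V} {S X Y : Set V} {a b c x y z u w : V}

/-- Build a complete bipartite set from parts. -/
lemma cb_of_parts (hX : ∀ u ∈ X, ∀ w ∈ X, ¬ G.Adj u w) (hY : ∀ u ∈ Y, ∀ w ∈ Y, ¬ G.Adj u w)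
    (hXY : ∀ u ∈ X, ∀ w ∈ Y, G.Adj u w) (hd : Disjoint X Y)
    (hXn : X.Nonempty) (hYn : Y.Nonempty) :
    IsCompleteBipartiteSet G (X ∪ Y) := by
  refine ⟨X, Y, hXn, hYn, rfl, hd, ?_⟩
  intro a ha b hb
  constructor
  · intro h
    rcases ha with ha | ha <;> rcases hb with hb | hb
    · exact absurd h (hX a ha b hb)
    · exact Or.inl ⟨ha, hb⟩
    · exact Or.inr ⟨ha, hb⟩
    · exact absurd h (hY a ha b hb)
  · rintro (⟨h1, h2⟩ | ⟨h1, h2⟩)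
    · exact hXY a h1 b h2
    · exact (hXY b h2 a h1).symm

/-- Extend a complete bipartite set to a biclique. -/
lemma exists_biclique_superset [Fintype V] (hS : IsCompleteBipartiteSet G S) :
    ∃ T, IsBiclique G T ∧ S ⊆ T := by
  obtain ⟨T, hST, hT, hmax⟩ := Finite.exists_le_maximal (p := IsCompleteBipartiteSet G) hS
  exact ⟨T, ⟨hT, fun T' hT' hTT' => le_antisymm (hmax hT' hTT') hTT'⟩, hST⟩

lemma exists_biclique_edge [Fintype V] (hab : G.Adj a b) :
    ∃ T, IsBiclique G T ∧ a ∈ T ∧ b ∈ T := by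
  have h : IsCompleteBipartiteSet G ({a} ∪ {b}) := by
    refine cb_of_parts ?_ ?_ ?_ ?_ (Set.singleton_nonempty a) (Set.singleton_nonempty b)
    · rintro u rfl w rfl; exact fun h => h.ne rfl
    · rintro u rfl w rfl; exact fun h => h.ne rfl
    · rintro u rfl w rfl; exact hab
    · exact Set.disjoint_singleton.mpr hab.ne
  obtain ⟨T, hT, hsub⟩ := exists_biclique_superset h
  exact ⟨T, hT, hsub (Or.inl rfl), hsub (Or.inr rfl)⟩

/-- A biclique containing a path x - z - y with x,y nonadjacent. -/
lemma exists_biclique_path [Fintype V] (hxy : ¬ G.Adj x y) (hx : G.Adj x z) (hy : G.Adj y z) :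
    ∃ T, IsBiclique G T ∧ x ∈ T ∧ y ∈ T ∧ z ∈ T := by
  have h : IsCompleteBipartiteSet G ({x, y} ∪ {z}) := by
    refine cb_of_parts ?_ ?_ ?_ ?_ (Set.insert_nonempty x {y}) (Set.singleton_nonempty z)
    · rintro u (rfl | rfl) w (rfl | rfl)
      · exact fun h => h.ne rfl
      · exact hxy
      · exact fun h => hxy h.symm
      · exact fun h => h.ne rfl
    · rintro u rfl w rfl; exact fun h => h.ne rfl
    · rintro u (rfl | rfl) w rfl
      · exact hx
      · exact hy
    · rw [Set.disjoint_singleton_right]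
      rintro (rfl | rfl)
      · exact hx.ne rfl
      · exact hy.ne rfl
  obtain ⟨T, hT, hsub⟩ := exists_biclique_superset h
  exact ⟨T, hT, hsub (Or.inl (Or.inl rfl)), hsub (Or.inl (Or.inr rfl)), hsub (Or.inr rfl)⟩

/-- Get the parts of a complete bipartite set, with a chosen member in the left part. -/
lemma parts_of_mem (hS : IsCompleteBipartiteSet G S) (ha : a ∈ S) :
    ∃ X Y : Set V, X.Nonempty ∧ Y.Nonempty ∧ S = X ∪ Y ∧ Disjoint X Y ∧
      (∀ u ∈ S, ∀ w ∈ S, (G.Adj u w ↔ ((u ∈ X ∧ w ∈ Y) ∨ (u ∈ Y ∧ w ∈ X)))) ∧ a ∈ X := by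
  obtain ⟨X, Y, hXn, hYn, h1, h2, h3⟩ := hS
  rcases (h1 ▸ ha : a ∈ X ∪ Y) with h | h
  · exact ⟨X, Y, hXn, hYn, h1, h2, h3, h⟩
  · refine ⟨Y, X, hYn, hXn, by rw [h1, Set.union_comm], h2.symm, ?_, h⟩
    intro u hu w hw
    rw [h3 u hu w hw]; tauto

/-- Get the parts of a complete bipartite set, with an adjacent pair split. -/
lemma parts_of_adj (hS : IsCompleteBipartiteSet G S) (ha : a ∈ S) (hb : b ∈ S)
    (hab : G.Adj a b) :
    ∃ X Y : Set V, X.Nonempty ∧ Y.Nonempty ∧ S = X ∪ Y ∧ Disjoint X Y ∧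
      (∀ u ∈ S, ∀ w ∈ S, (G.Adj u w ↔ ((u ∈ X ∧ w ∈ Y) ∨ (u ∈ Y ∧ w ∈ X)))) ∧
      a ∈ X ∧ b ∈ Y := by
  obtain ⟨X, Y, hXn, hYn, h1, h2, h3, haX⟩ := parts_of_mem hS ha
  rcases (h3 a ha b hb).mp hab with ⟨_, hbY⟩ | ⟨haY, _⟩
  · exact ⟨X, Y, hXn, hYn, h1, h2, h3, haX, hbY⟩
  · exact absurd (h2.le_bot ⟨haX, haY⟩) (by simp)

/-- In a complete bipartite set, two members of the same part are non-adjacent. -/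
lemma not_adj_same (hd : Disjoint X Y)
    (hiff : ∀ u ∈ S, ∀ w ∈ S, (G.Adj u w ↔ ((u ∈ X ∧ w ∈ Y) ∨ (u ∈ Y ∧ w ∈ X))))
    (huS : u ∈ S) (hwS : w ∈ S) (hu : u ∈ X) (hw : w ∈ X) : ¬ G.Adj u w := by
  intro h
  rcases (hiff u huS w hwS).mp h with ⟨_, h2⟩ | ⟨h1, _⟩
  · exact absurd (hd.le_bot ⟨hw, h2⟩) (by simp)
  · exact absurd (hd.le_bot ⟨hu, h1⟩) (by simp)

lemma adj_cross (hiff : ∀ u ∈ S, ∀ w ∈ S, (G.Adj u w ↔ ((u ∈ X ∧ w ∈ Y) ∨ (u ∈ Y ∧ w ∈ X))))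
    (huS : u ∈ S) (hwS : w ∈ S) (hu : u ∈ X) (hw : w ∈ Y) : G.Adj u w :=
  (hiff u huS w hwS).mpr (Or.inl ⟨hu, hw⟩)

/-- No triangle inside a complete bipartite set. -/
lemma no_triangle (hS : IsCompleteBipartiteSet G S) (ha : a ∈ S) (hb : b ∈ S) (hc : c ∈ S)
    (h1 : G.Adj a b) (h2 : G.Adj b c) (h3 : G.Adj a c) : False := by
  obtain ⟨X, Y, -, -, hu, hd, hiff, haX, hbY⟩ := parts_of_adj hS ha hb h1
  rcases (hiff a ha c hc).mp h3 with ⟨_, hcY⟩ | ⟨haY, _⟩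
  · exact not_adj_same hd.symm (fun u hu w hw => by rw [hiff u hu w hw]; tauto) hb hc hbY hcY h2
  · exact absurd (hd.le_bot ⟨haX, haY⟩) (by simp)

/-- Maximality: a biclique cannot be extended by a new vertex compatible with its parts. -/
lemma biclique_no_insert (hB : IsBiclique G S) (hu : S = X ∪ Y) (hd : Disjoint X Y)
    (hiff : ∀ u ∈ S, ∀ w ∈ S, (G.Adj u w ↔ ((u ∈ X ∧ w ∈ Y) ∨ (u ∈ Y ∧ w ∈ X))))
    (hz : z ∉ S) (h1 : ∀ x ∈ X, ¬ G.Adj z x) (h2 : ∀ y ∈ Y, G.Adj z y) : False := by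
  have hXS : X ⊆ S := hu ▸ Set.subset_union_left
  have hYS : Y ⊆ S := hu ▸ Set.subset_union_right
  have hYn : Y.Nonempty := by
    obtain ⟨X', Y', ⟨x', hx'⟩, ⟨y', hy'⟩, hS', -, hiff'⟩ := hB.1
    have hx'S : x' ∈ S := hS' ▸ Or.inl hx'
    have hy'S : y' ∈ S := hS' ▸ Or.inr hy'
    rcases (hiff x' hx'S y' hy'S).mp ((hiff' x' hx'S y' hy'S).mpr (Or.inl ⟨hx', hy'⟩)) with
      ⟨_, h⟩ | ⟨h, _⟩
    · exact ⟨y', h⟩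
    · exact ⟨x', h⟩
  have hcb : IsCompleteBipartiteSet G ((insert z X) ∪ Y) := by
    refine cb_of_parts ?_ ?_ ?_ ?_ (Set.insert_nonempty z X) hYn
    · rintro u (rfl | hu') w (rfl | hw')
      · exact fun h => h.ne rfl
      · exact h1 w hw'
      · exact fun h => h1 u hu' h.symm
      · exact not_adj_same hd hiff (hXS hu') (hXS hw') hu' hw'
    · intro u hu' w hw'
      exact not_adj_same hd.symm (fun u hu w hw => by rw [hiff u hu w hw]; tauto)
        (hYS hu') (hYS hw') hu' hw'
    · rintro u (rfl | hu') w hw'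
      · exact h2 w hw'
      · exact adj_cross hiff (hXS hu') (hYS hw') hu' hw'
    · refine Set.disjoint_left.mpr ?_
      rintro u (rfl | hu')
      · exact fun hzY => hz (hYS hzY)
      · exact fun huY => absurd (hd.le_bot ⟨hu', huY⟩) (by simp)
  have heq := hB.2 _ hcb (by rw [hu]; exact Set.union_subset_union_left Y (Set.subset_insert z X))
  exact hz (heq ▸ (Or.inl (Set.mem_insert z X)) : z ∈ S)

/-- Any two vertices of a complete bipartite set containing an edge are at distance ≤ 2. -/
lemma cb_dist_le_two (hG : G.Connected) (hS : IsCompleteBipartiteSet G S)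
    (hx : x ∈ S) (hy : y ∈ S) (hxy : G.Adj x y) (hu : u ∈ S) (hw : w ∈ S) :
    G.dist u w ≤ 2 := by
  obtain ⟨X, Y, -, -, hun, hd, hiff, hxX, hyY⟩ := parts_of_adj hS hx hy hxy
  have adj_dist : ∀ {p q : V}, G.Adj p q → G.dist p q ≤ 1 := fun h =>
    le_of_eq (SimpleGraph.dist_eq_one_iff_adj.mpr h)
  rcases (hun ▸ hu : u ∈ X ∪ Y) with huX | huY <;> rcases (hun ▸ hw : w ∈ X ∪ Y) with hwX | hwY
  · calc G.dist u w ≤ G.dist u y + G.dist y w := hG.dist_triangle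
      _ ≤ 1 + 1 := add_le_add (adj_dist (adj_cross hiff hu hy huX hyY))
          (adj_dist (adj_cross hiff hw hy hwX hyY).symm)
      _ = 2 := rfl
  · exact le_trans (adj_dist (adj_cross hiff hu hw huX hwY)) (by norm_num)
  · exact le_trans (adj_dist (adj_cross hiff hw hu hwX huY).symm) (by norm_num)
  · calc G.dist u w ≤ G.dist u x + G.dist x w := hG.dist_triangle
      _ ≤ 1 + 1 := add_le_add (adj_dist (adj_cross hiff hx hu hxX huY).symm)
          (adj_dist (adj_cross hiff hx hw hxX hwY))
      _ = 2 := rfl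

/-- Upper bound for bicliqueDist via a pair of members. -/
lemma bicliqueDist_le {C D : Set V} (hc : c ∈ C) (hd : u ∈ D) :
    bicliqueDist G C D ≤ G.dist c u :=
  Nat.sInf_le ⟨c, hc, u, hd, rfl⟩

/-- Lower bound for bicliqueDist. -/
lemma le_bicliqueDist {C D : Set V} {n : ℕ} (hc : c ∈ C) (hd : u ∈ D)
    (h : ∀ p ∈ C, ∀ q ∈ D, n ≤ G.dist p q) : n ≤ bicliqueDist G C D := by
  have hne : {m : ℕ | ∃ p ∈ C, ∃ q ∈ D, G.dist p q = m}.Nonempty :=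
    ⟨G.dist c u, c, hc, u, hd, rfl⟩
  obtain ⟨p, hp, q, hq, hpq⟩ := Nat.sInf_mem hne
  rw [bicliqueDist, ← hpq]
  exact h p hp q hq

lemma dist_getVert_left (hG : G.Connected) (p : G.Walk u w) :
    ∀ i, G.dist u (p.getVert i) ≤ i := by
  induction p with
  | nil => intro i; simp [SimpleGraph.Walk.getVert, SimpleGraph.dist_self]
  | @cons a x _ h q ih =>
    intro i
    match i with
    | 0 => simp [SimpleGraph.dist_self]
    | (n + 1) =>
      rw [SimpleGraph.Walk.getVert_cons_succ]
      calc G.dist a (q.getVert n) ≤ G.dist a x + G.dist x (q.getVert n) := hG.dist_triangle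
        _ ≤ 1 + n := add_le_add (le_of_eq (SimpleGraph.dist_eq_one_iff_adj.mpr h)) (ih n)
        _ = n + 1 := by omega

lemma dist_getVert_right (hG : G.Connected) (p : G.Walk u w) :
    ∀ i, G.dist (p.getVert i) w ≤ p.length - i := by
  induction p with
  | nil => intro i; simp [SimpleGraph.Walk.getVert, SimpleGraph.dist_self]
  | @cons a x b h q ih =>
    intro i
    match i with
    | 0 =>
      simp only [SimpleGraph.Walk.getVert_zero]
      calc G.dist a b ≤ G.dist a x + G.dist x b := hG.dist_triangle
        _ ≤ 1 + q.length := add_le_add (le_of_eq (SimpleGraph.dist_eq_one_iff_adj.mpr h))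
            (SimpleGraph.dist_le q)
        _ = (q.cons h).length - 0 := by simp [SimpleGraph.Walk.length_cons]; omega
    | (n + 1) =>
      rw [SimpleGraph.Walk.getVert_cons_succ]
      calc G.dist (q.getVert n) b ≤ q.length - n := ih n
        _ ≤ (q.cons h).length - (n + 1) := by simp [SimpleGraph.Walk.length_cons]

/-- End lemma: two distinct bicliques through `m`, each meeting `B`, each containing an edge.
Here `a ∈ B`, `a ~ m ~ c` with `a ≁ c`, and `c` is nonadjacent to all of `B` and outside `B`. -/
lemma end_lemma_aux [Fintype V] {B P Q : Set V} {a m c : V}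
    (hB : IsBiclique G B) (hu : B = P ∪ Q) (hd : Disjoint P Q)
    (hiff : ∀ u ∈ B, ∀ w ∈ B, (G.Adj u w ↔ ((u ∈ P ∧ w ∈ Q) ∨ (u ∈ Q ∧ w ∈ P))))
    (haP : a ∈ P)
    (ham : G.Adj a m) (hmc : G.Adj m c) (hac : ¬ G.Adj a c)
    (hcB : c ∉ B) (hcAdj : ∀ u ∈ B, ¬ G.Adj c u) :
    ∃ E₁ E₂ : Set V, E₁ ≠ E₂ ∧
      (IsBiclique G E₁ ∧ m ∈ E₁ ∧ (E₁ ∩ B).Nonempty ∧ ∃ x ∈ E₁, ∃ y ∈ E₁, G.Adj x y) ∧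
      (IsBiclique G E₂ ∧ m ∈ E₂ ∧ (E₂ ∩ B).Nonempty ∧ ∃ x ∈ E₂, ∃ y ∈ E₂, G.Adj x y) := by
  have haB : a ∈ B := hu ▸ Or.inl haP
  by_cases hA : ∃ q ∈ Q, G.Adj q m
  · obtain ⟨q, hqQ, hqm⟩ := hA
    have hqB : q ∈ B := hu ▸ Or.inr hqQ
    have haq : G.Adj a q := adj_cross hiff haB hqB haP hqQ
    obtain ⟨E₁, hE₁, haE₁, hmE₁⟩ := exists_biclique_edge ham
    obtain ⟨E₂, hE₂, hqE₂, hmE₂⟩ := exists_biclique_edge hqm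
    refine ⟨E₁, E₂, ?_, ⟨hE₁, hmE₁, ⟨a, haE₁, haB⟩, a, haE₁, m, hmE₁, ham⟩,
      ⟨hE₂, hmE₂, ⟨q, hqE₂, hqB⟩, q, hqE₂, m, hmE₂, hqm⟩⟩
    intro heq
    exact no_triangle hE₂.1 (heq ▸ haE₁) hqE₂ hmE₂ haq hqm ham
  · push_neg at hA
    have hQne : Q.Nonempty := by
      rcases Set.eq_empty_or_nonempty Q with hQ | hne
      · exfalso
        refine biclique_no_insert hB hu hd hiff hcB
          (fun x hx => hcAdj x (hu ▸ Or.inl hx)) (fun y hy => absurd hy (by simp [hQ]))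
      · exact hne
    obtain ⟨q, hqQ⟩ := hQne
    have hqB : q ∈ B := hu ▸ Or.inr hqQ
    have haq : G.Adj a q := adj_cross hiff haB hqB haP hqQ
    obtain ⟨E₁, hE₁, haE₁, hmE₁⟩ := exists_biclique_edge ham
    have hE₁facts : IsBiclique G E₁ ∧ m ∈ E₁ ∧ (E₁ ∩ B).Nonempty ∧
        ∃ x ∈ E₁, ∃ y ∈ E₁, G.Adj x y := ⟨hE₁, hmE₁, ⟨a, haE₁, haB⟩, a, haE₁, m, hmE₁, ham⟩
    obtain ⟨X, Y, -, -, hu1, hd1, hiff1, haX, hmY⟩ := parts_of_adj hE₁.1 haE₁ hmE₁ ham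
    by_cases hc1 : c ∈ E₁
    · have hcX : c ∈ X := by
        rcases (hu1 ▸ hc1 : c ∈ X ∪ Y) with h | h
        · exact h
        · exact absurd (adj_cross hiff1 haE₁ hc1 haX h) hac
      have hq1 : q ∉ E₁ := by
        intro hq1
        rcases (hu1 ▸ hq1 : q ∈ X ∪ Y) with h | h
        · exact not_adj_same hd1 hiff1 hq1 haE₁ h haX haq.symm
        · exact hcAdj q hqB (adj_cross hiff1 hc1 hq1 hcX h)
      obtain ⟨E₂, hE₂, hmE₂, hqE₂, haE₂⟩ :=
        exists_biclique_path (fun h => hA q hqQ h.symm) ham.symm haq.symm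
      exact ⟨E₁, E₂, fun heq => hq1 (heq ▸ hqE₂), hE₁facts,
        ⟨hE₂, hmE₂, ⟨q, hqE₂, hqB⟩, q, hqE₂, a, haE₂, haq.symm⟩⟩
    · obtain ⟨E₂, hE₂, haE₂, hcE₂, hmE₂⟩ := exists_biclique_path hac ham hmc.symm
      exact ⟨E₁, E₂, fun heq => hc1 (heq ▸ hcE₂), hE₁facts,
        ⟨hE₂, hmE₂, ⟨a, haE₂, haB⟩, a, haE₂, m, hmE₂, ham⟩⟩

lemma end_lemma [Fintype V] {B : Set V} {a m c : V}
    (hB : IsBiclique G B) (haB : a ∈ B)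
    (ham : G.Adj a m) (hmc : G.Adj m c) (hac : ¬ G.Adj a c)
    (hcB : c ∉ B) (hcAdj : ∀ u ∈ B, ¬ G.Adj c u) :
    ∃ E₁ E₂ : Set V, E₁ ≠ E₂ ∧
      (IsBiclique G E₁ ∧ m ∈ E₁ ∧ (E₁ ∩ B).Nonempty ∧ ∃ x ∈ E₁, ∃ y ∈ E₁, G.Adj x y) ∧
      (IsBiclique G E₂ ∧ m ∈ E₂ ∧ (E₂ ∩ B).Nonempty ∧ ∃ x ∈ E₂, ∃ y ∈ E₂, G.Adj x y) := by
  obtain ⟨P, Q, -, -, hu, hd, hiff, haP⟩ := parts_of_mem hB.1 haB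
  exact end_lemma_aux hB hu hd hiff haP ham hmc hac hcB hcAdj

/-- k=1 lemma: two distinct bicliques each meeting both of two disjoint bicliques joined
by an edge `a ~ b`. -/
lemma cross_lemma_aux [Fintype V] {B B' P Q S T : Set V} {a b : V}
    (hB : IsBiclique G B) (hB' : IsBiclique G B')
    (hdisj : ∀ u ∈ B, u ∉ B')
    (huB : B = P ∪ Q) (hdB : Disjoint P Q)
    (hiffB : ∀ u ∈ B, ∀ w ∈ B, (G.Adj u w ↔ ((u ∈ P ∧ w ∈ Q) ∨ (u ∈ Q ∧ w ∈ P))))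
    (huB' : B' = S ∪ T) (hdB' : Disjoint S T)
    (hiffB' : ∀ u ∈ B', ∀ w ∈ B', (G.Adj u w ↔ ((u ∈ S ∧ w ∈ T) ∨ (u ∈ T ∧ w ∈ S))))
    (haP : a ∈ P) (hbS : b ∈ S) (hab : G.Adj a b) :
    ∃ E₁ E₂ : Set V, E₁ ≠ E₂ ∧
      (IsBiclique G E₁ ∧ (E₁ ∩ B).Nonempty ∧ (E₁ ∩ B').Nonempty) ∧
      (IsBiclique G E₂ ∧ (E₂ ∩ B).Nonempty ∧ (E₂ ∩ B').Nonempty) := by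
  have haB : a ∈ B := huB ▸ Or.inl haP
  have hbB' : b ∈ B' := huB' ▸ Or.inl hbS
  obtain ⟨E₁, hE₁, haE₁, hbE₁⟩ := exists_biclique_edge hab
  have hE₁facts : IsBiclique G E₁ ∧ (E₁ ∩ B).Nonempty ∧ (E₁ ∩ B').Nonempty :=
    ⟨hE₁, ⟨a, haE₁, haB⟩, ⟨b, hbE₁, hbB'⟩⟩
  by_cases h1 : ∃ q ∈ Q, G.Adj q b
  · obtain ⟨q, hqQ, hqb⟩ := h1
    have hqB : q ∈ B := huB ▸ Or.inr hqQ
    have haq : G.Adj a q := adj_cross hiffB haB hqB haP hqQ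
    obtain ⟨E₂, hE₂, hqE₂, hbE₂⟩ := exists_biclique_edge hqb
    refine ⟨E₁, E₂, ?_, hE₁facts, ⟨hE₂, ⟨q, hqE₂, hqB⟩, ⟨b, hbE₂, hbB'⟩⟩⟩
    intro heq
    exact no_triangle hE₂.1 (heq ▸ haE₁) hqE₂ hbE₂ haq hqb hab
  by_cases h2 : ∃ t ∈ T, G.Adj t a
  · obtain ⟨t, htT, hta⟩ := h2
    have htB' : t ∈ B' := huB' ▸ Or.inr htT
    have htb : G.Adj t b := (hiffB' t htB' b hbB').mpr (Or.inr ⟨htT, hbS⟩)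
    obtain ⟨E₂, hE₂, htE₂, haE₂⟩ := exists_biclique_edge hta
    refine ⟨E₁, E₂, ?_, hE₁facts, ⟨hE₂, ⟨a, haE₂, haB⟩, ⟨t, htE₂, htB'⟩⟩⟩
    intro heq
    exact no_triangle hE₂.1 (heq ▸ haE₁) htE₂ (heq ▸ hbE₁) hta.symm htb hab
  push_neg at h1 h2
  obtain ⟨X, Y, -, -, hu1, hd1, hiff1, haX, hbY⟩ := parts_of_adj hE₁.1 haE₁ hbE₁ hab
  by_cases hq3 : ∃ q ∈ Q, q ∉ E₁
  · obtain ⟨q, hqQ, hqE⟩ := hq3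
    have hqB : q ∈ B := huB ▸ Or.inr hqQ
    have haq : G.Adj a q := adj_cross hiffB haB hqB haP hqQ
    obtain ⟨E₂, hE₂, hbE₂, hqE₂, haE₂⟩ :=
      exists_biclique_path (fun h => h1 q hqQ h.symm) hab.symm haq.symm
    exact ⟨E₁, E₂, fun heq => hqE (heq ▸ hqE₂), hE₁facts,
      ⟨hE₂, ⟨q, hqE₂, hqB⟩, ⟨b, hbE₂, hbB'⟩⟩⟩
  by_cases ht3 : ∃ t ∈ T, t ∉ E₁
  · obtain ⟨t, htT, htE⟩ := ht3
    have htB' : t ∈ B' := huB' ▸ Or.inr htT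
    have htb : G.Adj t b := (hiffB' t htB' b hbB').mpr (Or.inr ⟨htT, hbS⟩)
    obtain ⟨E₂, hE₂, haE₂, htE₂, hbE₂⟩ :=
      exists_biclique_path (fun h => h2 t htT h.symm) hab htb
    exact ⟨E₁, E₂, fun heq => htE (heq ▸ htE₂), hE₁facts,
      ⟨hE₂, ⟨a, haE₂, haB⟩, ⟨t, htE₂, htB'⟩⟩⟩
  push_neg at hq3 ht3
  have hQY : ∀ q ∈ Q, q ∈ Y := by
    intro q hqQ
    have hqB : q ∈ B := huB ▸ Or.inr hqQ
    have haq : G.Adj a q := adj_cross hiffB haB hqB haP hqQ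
    rcases (hu1 ▸ hq3 q hqQ : q ∈ X ∪ Y) with h | h
    · exact absurd haq.symm (not_adj_same hd1 hiff1 (hq3 q hqQ) haE₁ h haX)
    · exact h
  have hTX : ∀ t ∈ T, t ∈ X := by
    intro t htT
    have htB' : t ∈ B' := huB' ▸ Or.inr htT
    rcases (hu1 ▸ ht3 t htT : t ∈ X ∪ Y) with h | h
    · exact h
    · exact absurd (adj_cross hiff1 haE₁ (ht3 t htT) haX h).symm (h2 t htT)
  rcases Set.eq_empty_or_nonempty T with hTe | ⟨t, htT⟩
  · -- T empty : find w ∈ P nonadjacent to b, then an edge from w into S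
    have hw : ∃ w ∈ P, ¬ G.Adj b w := by
      by_contra hcon
      push_neg at hcon
      refine biclique_no_insert hB (by rw [huB, Set.union_comm]) hdB.symm
        (fun u hu w hw => by rw [hiffB u hu w hw]; tauto)
        (fun hbB => hdisj b hbB hbB') (fun x hx => fun h => h1 x hx h.symm) hcon
    obtain ⟨w, hwP, hwb⟩ := hw
    have hwB : w ∈ B := huB ▸ Or.inl hwP
    have hwE₁ : w ∉ E₁ := by
      intro hwE
      rcases (hu1 ▸ hwE : w ∈ X ∪ Y) with h | h
      · exact hwb (adj_cross hiff1 hwE hbE₁ h hbY).symm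
      · exact not_adj_same hdB hiffB haB hwB haP hwP (adj_cross hiff1 haE₁ hwE haX h)
    have hs : ∃ s ∈ S, G.Adj w s := by
      by_contra hcon
      push_neg at hcon
      refine biclique_no_insert hB' huB' hdB' hiffB' (hdisj w hwB) hcon
        (fun y hy => absurd hy (by simp [hTe]))
    obtain ⟨s, hsS, hws⟩ := hs
    have hsB' : s ∈ B' := huB' ▸ Or.inl hsS
    obtain ⟨E₂, hE₂, hwE₂, hsE₂⟩ := exists_biclique_edge hws
    exact ⟨E₁, E₂, fun heq => hwE₁ (heq ▸ hwE₂), hE₁facts,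
      ⟨hE₂, ⟨w, hwE₂, hwB⟩, ⟨s, hsE₂, hsB'⟩⟩⟩
  · -- T nonempty : t ∈ X, then an edge from t into P
    have htB' : t ∈ B' := huB' ▸ Or.inr htT
    have htX : t ∈ X := hTX t htT
    have htB : t ∉ B := fun h => hdisj t h htB'
    have hp : ∃ p ∈ P, G.Adj t p := by
      by_contra hcon
      push_neg at hcon
      refine biclique_no_insert hB huB hdB hiffB htB hcon
        (fun y hy => adj_cross hiff1 (ht3 t htT) (hq3 y hy) htX (hQY y hy))
    obtain ⟨p, hpP, htp⟩ := hp
    have hpB : p ∈ B := huB ▸ Or.inl hpP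
    have hpE₁ : p ∉ E₁ := by
      intro hpE
      rcases (hu1 ▸ hpE : p ∈ X ∪ Y) with h | h
      · exact not_adj_same hd1 hiff1 (ht3 t htT) hpE htX h htp
      · exact not_adj_same hdB hiffB haB hpB haP hpP (adj_cross hiff1 haE₁ hpE haX h)
    obtain ⟨E₂, hE₂, htE₂, hpE₂⟩ := exists_biclique_edge htp
    exact ⟨E₁, E₂, fun heq => hpE₁ (heq ▸ hpE₂), hE₁facts,
      ⟨hE₂, ⟨p, hpE₂, hpB⟩, ⟨t, htE₂, htB'⟩⟩⟩

lemma cross_lemma [Fintype V] {B B' : Set V} {a b : V}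
    (hB : IsBiclique G B) (hB' : IsBiclique G B')
    (hdisj : ∀ u ∈ B, u ∉ B') (haB : a ∈ B) (hbB' : b ∈ B') (hab : G.Adj a b) :
    ∃ E₁ E₂ : Set V, E₁ ≠ E₂ ∧
      (IsBiclique G E₁ ∧ (E₁ ∩ B).Nonempty ∧ (E₁ ∩ B').Nonempty) ∧
      (IsBiclique G E₂ ∧ (E₂ ∩ B).Nonempty ∧ (E₂ ∩ B').Nonempty) := by
  obtain ⟨P, Q, -, -, huB, hdB, hiffB, haP⟩ := parts_of_mem hB.1 haB
  obtain ⟨S, T, -, -, huB', hdB', hiffB', hbS⟩ := parts_of_mem hB'.1 hbB'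
  exact cross_lemma_aux hB hB' hdisj huB hdB hiffB huB' hdB' hiffB' haP hbS hab

/-- k=2 lemma: three distinct bicliques through the middle vertex `m` of a path
`a ~ m ~ b` between two bicliques all of whose pairs are non-adjacent and distinct. -/
lemma mid_lemma_aux [Fintype V] {B B' P Q S T : Set V} {a m b : V}
    (hB : IsBiclique G B) (hB' : IsBiclique G B')
    (hfar : ∀ u ∈ B, ∀ w ∈ B', ¬ G.Adj u w ∧ u ≠ w)
    (huB : B = P ∪ Q) (hdB : Disjoint P Q)
    (hiffB : ∀ u ∈ B, ∀ w ∈ B, (G.Adj u w ↔ ((u ∈ P ∧ w ∈ Q) ∨ (u ∈ Q ∧ w ∈ P))))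
    (huB' : B' = S ∪ T) (hdB' : Disjoint S T)
    (hiffB' : ∀ u ∈ B', ∀ w ∈ B', (G.Adj u w ↔ ((u ∈ S ∧ w ∈ T) ∨ (u ∈ T ∧ w ∈ S))))
    (haP : a ∈ P) (hbS : b ∈ S) (ham : G.Adj a m) (hmb : G.Adj m b) :
    ∃ C₁ C₂ C₃ : Set V, C₁ ≠ C₂ ∧ C₁ ≠ C₃ ∧ C₂ ≠ C₃ ∧
      (IsBiclique G C₁ ∧ m ∈ C₁) ∧ (IsBiclique G C₂ ∧ m ∈ C₂) ∧
      (IsBiclique G C₃ ∧ m ∈ C₃) := by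
  have haB : a ∈ B := huB ▸ Or.inl haP
  have hbB' : b ∈ B' := huB' ▸ Or.inl hbS
  have hbB : b ∉ B := fun h => (hfar b h b hbB').2 rfl
  have haB' : a ∉ B' := fun h => (hfar a haB a h).2 rfl
  have hab : ¬ G.Adj a b := (hfar a haB b hbB').1
  have hQne : Q.Nonempty := by
    rcases Set.eq_empty_or_nonempty Q with hQ | hne
    · exact absurd (biclique_no_insert hB huB hdB hiffB hbB
        (fun x hx h => (hfar x (huB ▸ Or.inl hx) b hbB').1 h.symm)
        (fun y hy => absurd hy (by simp [hQ]))) (fun h => h)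
    · exact hne
  have hTne : T.Nonempty := by
    rcases Set.eq_empty_or_nonempty T with hT | hne
    · exact absurd (biclique_no_insert hB' huB' hdB' hiffB' haB'
        (fun x hx h => (hfar a haB x (huB' ▸ Or.inl hx)).1 h)
        (fun y hy => absurd hy (by simp [hT]))) (fun h => h)
    · exact hne
  obtain ⟨q, hqQ⟩ := hQne
  obtain ⟨t, htT⟩ := hTne
  have hqB : q ∈ B := huB ▸ Or.inr hqQ
  have htB' : t ∈ B' := huB' ▸ Or.inr htT
  have haq : G.Adj a q := adj_cross hiffB haB hqB haP hqQ
  have hbt : G.Adj b t := adj_cross hiffB' hbB' htB' hbS htT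
  have hqb : ¬ G.Adj q b := (hfar q hqB b hbB').1
  have hat : ¬ G.Adj a t := (hfar a haB t htB').1
  have hqt : ¬ G.Adj q t := (hfar q hqB t htB').1
  obtain ⟨C₁, hC₁, haC₁, hbC₁, hmC₁⟩ := exists_biclique_path hab ham hmb.symm
  -- parts of C₁ : a, b on one side, m on the other
  obtain ⟨X, Y, -, -, hu1, hd1, hiff1, haX, hmY⟩ := parts_of_adj hC₁.1 haC₁ hmC₁ ham
  have hbX : b ∈ X := by
    rcases (hu1 ▸ hbC₁ : b ∈ X ∪ Y) with h | h
    · exact h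
    · exact absurd hmb (not_adj_same hd1.symm
        (fun u hu w hw => by rw [hiff1 u hu w hw]; tauto) hmC₁ hbC₁ hmY h).elim
  by_cases hqm : G.Adj q m
  · -- C₂ through q, b, m
    obtain ⟨C₂, hC₂, hqC₂, hbC₂, hmC₂⟩ := exists_biclique_path hqb hqm hmb.symm
    have h12 : C₁ ≠ C₂ := by
      intro heq
      exact no_triangle hC₁.1 haC₁ (heq ▸ hqC₂) hmC₁ haq hqm ham
    by_cases htm : G.Adj t m
    · -- C₃ through a, t, m
      obtain ⟨C₃, hC₃, haC₃, htC₃, hmC₃⟩ := exists_biclique_path hat ham htm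
      refine ⟨C₁, C₂, C₃, h12, ?_, ?_, ⟨hC₁, hmC₁⟩, ⟨hC₂, hmC₂⟩, ⟨hC₃, hmC₃⟩⟩
      · intro heq
        exact no_triangle hC₁.1 hbC₁ (heq ▸ htC₃) hmC₁ hbt htm hmb.symm
      · intro heq
        exact no_triangle hC₃.1 haC₃ (heq ▸ hqC₂) hmC₃ haq hqm ham
    · -- C₃ through m, t, b
      obtain ⟨C₃, hC₃, hmC₃, htC₃, hbC₃⟩ :=
        exists_biclique_path (fun h => htm h.symm) hmb hbt.symm
      refine ⟨C₁, C₂, C₃, h12, ?_, ?_, ⟨hC₁, hmC₁⟩, ⟨hC₂, hmC₂⟩, ⟨hC₃, hmC₃⟩⟩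
      · intro heq
        have htC₁ : t ∈ C₁ := heq ▸ htC₃
        rcases (hu1 ▸ htC₁ : t ∈ X ∪ Y) with h | h
        · exact not_adj_same hd1 hiff1 htC₁ hbC₁ h hbX hbt.symm
        · exact hat (adj_cross hiff1 haC₁ htC₁ haX h)
      · intro heq
        -- C₂ = C₃ contains q, b, m, t ; derive Adj t q, contradiction
        obtain ⟨X2, Y2, -, -, hu2, hd2, hiff2, hmX2, hbY2⟩ := parts_of_adj hC₂.1 hmC₂ hbC₂ hmb
        have hqY2 : q ∈ Y2 := by
          rcases (hu2 ▸ hqC₂ : q ∈ X2 ∪ Y2) with h | h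
          · exact absurd hqm.symm (not_adj_same hd2 hiff2 hmC₂ hqC₂ hmX2 h)
          · exact h
        have htC₂ : t ∈ C₂ := heq ▸ htC₃
        have htX2 : t ∈ X2 := by
          rcases (hu2 ▸ htC₂ : t ∈ X2 ∪ Y2) with h | h
          · exact h
          · exact absurd hbt.symm (not_adj_same hd2.symm
              (fun u hu w hw => by rw [hiff2 u hu w hw]; tauto) htC₂ hbC₂ h hbY2).elim
        exact hqt (adj_cross hiff2 htC₂ hqC₂ htX2 hqY2).symm
  · -- C₂ through m, q, a
    obtain ⟨C₂, hC₂, hmC₂, hqC₂, haC₂⟩ :=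
      exists_biclique_path (fun h => hqm h.symm) ham.symm haq.symm
    have hqC₁ : q ∉ C₁ := by
      intro hqC₁
      rcases (hu1 ▸ hqC₁ : q ∈ X ∪ Y) with h | h
      · exact not_adj_same hd1 hiff1 hqC₁ haC₁ h haX haq.symm
      · exact hqb (adj_cross hiff1 hbC₁ hqC₁ hbX h).symm
    have h12 : C₁ ≠ C₂ := fun heq => hqC₁ (heq ▸ hqC₂)
    by_cases htm : G.Adj t m
    · -- C₃ through a, t, m
      obtain ⟨C₃, hC₃, haC₃, htC₃, hmC₃⟩ := exists_biclique_path hat ham htm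
      refine ⟨C₁, C₂, C₃, h12, ?_, ?_, ⟨hC₁, hmC₁⟩, ⟨hC₂, hmC₂⟩, ⟨hC₃, hmC₃⟩⟩
      · intro heq
        exact no_triangle hC₁.1 hbC₁ (heq ▸ htC₃) hmC₁ hbt htm hmb.symm
      · intro heq
        -- C₂ = C₃ contains m, q, a, t ; derive Adj t q
        obtain ⟨X2, Y2, -, -, hu2, hd2, hiff2, haX2, hmY2⟩ := parts_of_adj hC₂.1 haC₂ hmC₂ ham
        have hqY2 : q ∈ Y2 := by
          rcases (hu2 ▸ hqC₂ : q ∈ X2 ∪ Y2) with h | h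
          · exact absurd haq (not_adj_same hd2 hiff2 haC₂ hqC₂ haX2 h)
          · exact h
        have htC₂ : t ∈ C₂ := heq ▸ htC₃
        have htX2 : t ∈ X2 := by
          rcases (hu2 ▸ htC₂ : t ∈ X2 ∪ Y2) with h | h
          · exact h
          · exact absurd htm.symm (not_adj_same hd2.symm
              (fun u hu w hw => by rw [hiff2 u hu w hw]; tauto) hmC₂ htC₂ hmY2 h).elim
        exact hqt (adj_cross hiff2 htC₂ hqC₂ htX2 hqY2).symm
    · -- C₃ through m, t, b
      obtain ⟨C₃, hC₃, hmC₃, htC₃, hbC₃⟩ :=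
        exists_biclique_path (fun h => htm h.symm) hmb hbt.symm
      refine ⟨C₁, C₂, C₃, h12, ?_, ?_, ⟨hC₁, hmC₁⟩, ⟨hC₂, hmC₂⟩, ⟨hC₃, hmC₃⟩⟩
      · intro heq
        have htC₁ : t ∈ C₁ := heq ▸ htC₃
        rcases (hu1 ▸ htC₁ : t ∈ X ∪ Y) with h | h
        · exact not_adj_same hd1 hiff1 htC₁ hbC₁ h hbX hbt.symm
        · exact hat (adj_cross hiff1 haC₁ htC₁ haX h)
      · intro heq
        -- C₂ = C₃ contains m, q, a, t, b ; derive Adj b q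
        obtain ⟨X2, Y2, -, -, hu2, hd2, hiff2, haX2, hmY2⟩ := parts_of_adj hC₂.1 haC₂ hmC₂ ham
        have hqY2 : q ∈ Y2 := by
          rcases (hu2 ▸ hqC₂ : q ∈ X2 ∪ Y2) with h | h
          · exact absurd haq (not_adj_same hd2 hiff2 haC₂ hqC₂ haX2 h)
          · exact h
        have hbC₂ : b ∈ C₂ := heq ▸ hbC₃
        have hbX2 : b ∈ X2 := by
          rcases (hu2 ▸ hbC₂ : b ∈ X2 ∪ Y2) with h | h
          · exact h
          · exact absurd hmb (not_adj_same hd2.symm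
              (fun u hu w hw => by rw [hiff2 u hu w hw]; tauto) hmC₂ hbC₂ hmY2 h).elim
        exact hqb (adj_cross hiff2 hbC₂ hqC₂ hbX2 hqY2).symm

lemma mid_lemma [Fintype V] {B B' : Set V} {a m b : V}
    (hB : IsBiclique G B) (hB' : IsBiclique G B')
    (hfar : ∀ u ∈ B, ∀ w ∈ B', ¬ G.Adj u w ∧ u ≠ w)
    (haB : a ∈ B) (hbB' : b ∈ B') (ham : G.Adj a m) (hmb : G.Adj m b) :
    ∃ C₁ C₂ C₃ : Set V, C₁ ≠ C₂ ∧ C₁ ≠ C₃ ∧ C₂ ≠ C₃ ∧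
      (IsBiclique G C₁ ∧ m ∈ C₁) ∧ (IsBiclique G C₂ ∧ m ∈ C₂) ∧
      (IsBiclique G C₃ ∧ m ∈ C₃) := by
  obtain ⟨P, Q, -, -, huB, hdB, hiffB, haP⟩ := parts_of_mem hB.1 haB
  obtain ⟨S, T, -, -, huB', hdB', hiffB', hbS⟩ := parts_of_mem hB'.1 hbB'
  exact mid_lemma_aux hB hB' hfar huB hdB hiffB huB' hdB' hiffB' haP hbS ham hmb

end BicliqueProof

open BicliqueProof

/-- If `B, B'` are bicliques of a connected graph `G` with `d_G(B, B') = k > 0`, then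
there are at least `k + 1` bicliques of `G`, each different from `B` and `B'`,
each at distance at most `k - 1` to each of `B` and `B'`. -/
theorem exists_bicliques_between
    {V : Type*} [Fintype V] (G : SimpleGraph V) (hG : G.Connected)
    (B B' : Set V) (hB : IsBiclique G B) (hB' : IsBiclique G B')
    (k : ℕ) (hk : bicliqueDist G B B' = k) (hpos : 0 < k) :
    ∃ 𝓑 : Finset (Set V), k + 1 ≤ 𝓑.card ∧
      ∀ C ∈ 𝓑, IsBiclique G C ∧ C ≠ B ∧ C ≠ B' ∧
        bicliqueDist G C B ≤ k - 1 ∧ bicliqueDist G C B' ≤ k - 1 := by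

  classical
  have hDSne : {n : ℕ | ∃ b ∈ B, ∃ b' ∈ B', G.dist b b' = n}.Nonempty := by
    by_contra h
    rw [Set.not_nonempty_iff_eq_empty] at h
    rw [bicliqueDist, h, Nat.sInf_empty] at hk
    omega
  have hmem := Nat.sInf_mem hDSne
  rw [← bicliqueDist, hk] at hmem
  obtain ⟨u₀, hu₀, w₀, hw₀, hdist⟩ := hmem
  have hF1 : ∀ u ∈ B, ∀ w ∈ B', k ≤ G.dist u w := fun u hu w hw =>
    hk ▸ Nat.sInf_le ⟨u, hu, w, hw, rfl⟩
  obtain ⟨p, hp⟩ := hG.exists_walk_length_eq_dist u₀ w₀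
  set v : ℕ → V := fun i => p.getVert i with hv
  have hlen : p.length = k := by rw [hp, hdist]
  have hv0 : v 0 = u₀ := p.getVert_zero
  have hvk : v k = w₀ := by
    show p.getVert k = w₀
    rw [← hlen]
    exact p.getVert_length
  have hadj : ∀ i, i < k → G.Adj (v i) (v (i + 1)) := fun i hi =>
    p.adj_getVert_succ (hlen ▸ hi)
  have hdL : ∀ i, G.dist u₀ (v i) ≤ i := fun i => dist_getVert_left hG p i
  have hdR : ∀ i, G.dist (v i) w₀ ≤ k - i := fun i => by
    have := dist_getVert_right hG p i
    rwa [hlen] at this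
  -- case k = 1
  rcases eq_or_lt_of_le (show 1 ≤ k by omega) with hk1 | hk1
  · have hdisj : ∀ u ∈ B, u ∉ B' := by
      intro u hu hu'
      have := hF1 u hu u hu'
      rw [SimpleGraph.dist_self] at this
      omega
    have hadj01 : G.Adj u₀ w₀ := by
      have := hadj 0 (by omega)
      rwa [hv0, show (0 + 1 : ℕ) = k by omega, hvk] at this
    obtain ⟨E₁, E₂, hne, ⟨hE₁, hE₁B, hE₁B'⟩, ⟨hE₂, hE₂B, hE₂B'⟩⟩ :=
      cross_lemma hB hB' hdisj hu₀ hw₀ hadj01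
    refine ⟨{E₁, E₂}, ?_, ?_⟩
    · rw [Finset.card_pair hne]; omega
    · intro C hC
      have hfacts : IsBiclique G C ∧ (C ∩ B).Nonempty ∧ (C ∩ B').Nonempty := by
        rcases Finset.mem_insert.mp hC with rfl | hC
        · exact ⟨hE₁, hE₁B, hE₁B'⟩
        · rw [Finset.mem_singleton] at hC
          subst hC
          exact ⟨hE₂, hE₂B, hE₂B'⟩
      obtain ⟨hCbic, ⟨x, hxC, hxB⟩, ⟨y, hyC, hyB'⟩⟩ := hfacts
      refine ⟨hCbic, ?_, ?_, ?_, ?_⟩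
      · rintro rfl; exact hdisj y hyC hyB'
      · rintro rfl; exact hdisj x hxB hxC
      · exact le_trans (bicliqueDist_le hxC hxB) (by rw [SimpleGraph.dist_self]; omega)
      · exact le_trans (bicliqueDist_le hyC hyB') (by rw [SimpleGraph.dist_self]; omega)
  -- case k = 2
  rcases eq_or_lt_of_le (show 2 ≤ k by omega) with hk2 | hk2
  · have hfar : ∀ u ∈ B, ∀ w ∈ B', ¬ G.Adj u w ∧ u ≠ w := by
      intro u hu w hw
      constructor
      · intro h
        have h1 := hF1 u hu w hw
        rw [(SimpleGraph.dist_eq_one_iff_adj).mpr h] at h1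
        omega
      · rintro rfl
        have := hF1 u hu u hw
        rw [SimpleGraph.dist_self] at this
        omega
    have ham : G.Adj u₀ (v 1) := by
      have := hadj 0 (by omega)
      rwa [hv0] at this
    have hmb : G.Adj (v 1) w₀ := by
      have := hadj 1 (by omega)
      rwa [show (1 + 1 : ℕ) = k by omega, hvk] at this
    obtain ⟨C₁, C₂, C₃, h12, h13, h23, ⟨hC₁, hm₁⟩, ⟨hC₂, hm₂⟩, ⟨hC₃, hm₃⟩⟩ :=
      mid_lemma hB hB' hfar hu₀ hw₀ ham hmb
    have hd1 : G.dist u₀ (v 1) ≤ 1 := hdL 1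
    have hd1' : G.dist (v 1) w₀ ≤ 1 := by have := hdR 1; omega
    refine ⟨{C₁, C₂, C₃}, ?_, ?_⟩
    · rw [Finset.card_insert_of_notMem (by simp [h12, h13]), Finset.card_pair h23]
      omega
    · intro C hC
      have hfacts : IsBiclique G C ∧ v 1 ∈ C := by
        rcases Finset.mem_insert.mp hC with rfl | hC
        · exact ⟨hC₁, hm₁⟩
        rcases Finset.mem_insert.mp hC with rfl | hC
        · exact ⟨hC₂, hm₂⟩
        rw [Finset.mem_singleton] at hC
        subst hC
        exact ⟨hC₃, hm₃⟩
      obtain ⟨hCbic, hmC⟩ := hfacts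
      refine ⟨hCbic, ?_, ?_, ?_, ?_⟩
      · rintro rfl
        have := hF1 (v 1) hmC w₀ hw₀
        omega
      · rintro rfl
        have := hF1 u₀ hu₀ (v 1) hmC
        omega
      · refine le_trans (bicliqueDist_le hmC hu₀) ?_
        rw [SimpleGraph.dist_comm]
        omega
      · exact le_trans (bicliqueDist_le hmC hw₀) (by omega)
  -- case k ≥ 3
  obtain ⟨j, rfl⟩ : ∃ j, k = j + 3 := ⟨k - 3, by omega⟩
  -- B-end
  have ham : G.Adj u₀ (v 1) := by have := hadj 0 (by omega); rwa [hv0] at this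
  have hmc : G.Adj (v 1) (v 2) := hadj 1 (by omega)
  have hd2low : 2 ≤ G.dist u₀ (v 2) := by
    have h1 := hG.dist_triangle (u := u₀) (v := v 2) (w := w₀)
    have h2 := hdR 2
    omega
  have hac : ¬ G.Adj u₀ (v 2) := fun h => by
    have := (SimpleGraph.dist_eq_one_iff_adj).mpr h
    omega
  have hcB : v 2 ∉ B := fun h => by
    have h1 := hF1 (v 2) h w₀ hw₀
    have h2 := hdR 2
    omega
  have hcAdj : ∀ u ∈ B, ¬ G.Adj (v 2) u := by
    intro u hu h
    have h1 := hF1 u hu w₀ hw₀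
    have h2 := hG.dist_triangle (u := u) (v := v 2) (w := w₀)
    have h3 := hdR 2
    have h4 : G.dist u (v 2) = 1 := (SimpleGraph.dist_eq_one_iff_adj).mpr h.symm
    omega
  obtain ⟨E₁, E₂, hEne, ⟨hE₁, hmE₁, hE₁B, xE₁, hxE₁, yE₁, hyE₁, hxyE₁⟩,
      ⟨hE₂, hmE₂, hE₂B, xE₂, hxE₂, yE₂, hyE₂, hxyE₂⟩⟩ :=
    end_lemma hB hu₀ ham hmc hac hcB hcAdj
  -- B'-end
  have ham' : G.Adj w₀ (v (j + 2)) := by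
    have := hadj (j + 2) (by omega)
    rw [show j + 2 + 1 = j + 3 by omega, hvk] at this
    exact this.symm
  have hmc' : G.Adj (v (j + 2)) (v (j + 1)) := (hadj (j + 1) (by omega)).symm
  have hac' : ¬ G.Adj w₀ (v (j + 1)) := by
    intro h
    have h1 := hG.dist_triangle (u := u₀) (v := v (j + 1)) (w := w₀)
    have h2 := hdL (j + 1)
    have h3 : G.dist (v (j + 1)) w₀ = 1 := (SimpleGraph.dist_eq_one_iff_adj).mpr h.symm
    omega
  have hcB' : v (j + 1) ∉ B' := fun h => by
    have h1 := hF1 u₀ hu₀ (v (j + 1)) h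
    have h2 := hdL (j + 1)
    omega
  have hcAdj' : ∀ u ∈ B', ¬ G.Adj (v (j + 1)) u := by
    intro u hu h
    have h1 := hF1 u₀ hu₀ u hu
    have h2 := hG.dist_triangle (u := u₀) (v := v (j + 1)) (w := u)
    have h3 := hdL (j + 1)
    have h4 : G.dist (v (j + 1)) u = 1 := (SimpleGraph.dist_eq_one_iff_adj).mpr h
    omega
  obtain ⟨F₁, F₂, hFne, ⟨hF₁, hmF₁, hF₁B', xF₁, hxF₁, yF₁, hyF₁, hxyF₁⟩,
      ⟨hF₂, hmF₂, hF₂B', xF₂, hxF₂, yF₂, hyF₂, hxyF₂⟩⟩ :=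
    end_lemma hB' hw₀ ham' hmc' hac' hcB' hcAdj'
  -- stars
  have hstar : ∀ i, 1 ≤ i → i ≤ j → ∃ C : Set V,
      IsBiclique G C ∧ v i ∈ C ∧ v (i + 2) ∈ C ∧ v (i + 1) ∈ C := by
    intro i h1 h2
    have hnadj : ¬ G.Adj (v i) (v (i + 2)) := by
      intro h
      have ha := hG.dist_triangle (u := u₀) (v := v i) (w := w₀)
      have hb := hG.dist_triangle (u := v i) (v := v (i + 2)) (w := w₀)
      have hcc := hdL i
      have hdd := hdR (i + 2)
      have he : G.dist (v i) (v (i + 2)) = 1 := (SimpleGraph.dist_eq_one_iff_adj).mpr h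
      omega
    exact exists_biclique_path hnadj (hadj i (by omega)) (hadj (i + 1) (by omega)).symm
  have hstar' : ∀ i : ℕ, ∃ C : Set V, 1 ≤ i → i ≤ j →
      IsBiclique G C ∧ v i ∈ C ∧ v (i + 2) ∈ C ∧ v (i + 1) ∈ C := by
    intro i
    by_cases h : 1 ≤ i ∧ i ≤ j
    · obtain ⟨C, hC⟩ := hstar i h.1 h.2
      exact ⟨C, fun _ _ => hC⟩
    · exact ⟨∅, fun h1 h2 => absurd ⟨h1, h2⟩ h⟩
  choose g hg using hstar'
  -- lower distance bounds for stars
  have hglowB : ∀ i, 1 ≤ i → i ≤ j → ∀ c ∈ g i, ∀ u ∈ B, i ≤ G.dist c u := by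
    intro i h1 h2 c hc u hu
    obtain ⟨hgbic, hvi, hvi2, hvi1⟩ := hg i h1 h2
    obtain ⟨X, Y, -, -, hu1, hd1, hiff1, hviX, hvi1Y⟩ :=
      parts_of_adj hgbic.1 hvi hvi1 (hadj i (by omega))
    have hvi2X : v (i + 2) ∈ X := by
      rcases (hu1 ▸ hvi2 : v (i + 2) ∈ X ∪ Y) with h | h
      · exact h
      · exact absurd (hadj (i + 1) (by omega)) (not_adj_same hd1.symm
          (fun a ha b hb => by rw [hiff1 a ha b hb]; tauto) hvi1 hvi2 hvi1Y h)
    have h1' := hF1 u hu w₀ hw₀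
    rcases (hu1 ▸ hc : c ∈ X ∪ Y) with hcX | hcY
    · have hadjc : G.Adj c (v (i + 1)) := adj_cross hiff1 hc hvi1 hcX hvi1Y
      have ht1 := hG.dist_triangle (u := u) (v := c) (w := w₀)
      have ht2 := hG.dist_triangle (u := c) (v := v (i + 1)) (w := w₀)
      have ht3 := hdR (i + 1)
      have ht4 : G.dist c (v (i + 1)) = 1 := (SimpleGraph.dist_eq_one_iff_adj).mpr hadjc
      have hcm : G.dist c u = G.dist u c := SimpleGraph.dist_comm
      omega
    · have hadjc : G.Adj (v (i + 2)) c := adj_cross hiff1 hvi2 hc hvi2X hcY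
      have ht1 := hG.dist_triangle (u := u) (v := c) (w := w₀)
      have ht2 := hG.dist_triangle (u := c) (v := v (i + 2)) (w := w₀)
      have ht3 := hdR (i + 2)
      have ht4 : G.dist c (v (i + 2)) = 1 := (SimpleGraph.dist_eq_one_iff_adj).mpr hadjc.symm
      have hcm : G.dist c u = G.dist u c := SimpleGraph.dist_comm
      omega
  have hglowB' : ∀ i, 1 ≤ i → i ≤ j → ∀ c ∈ g i, ∀ u ∈ B', j + 1 - i ≤ G.dist c u := by
    intro i h1 h2 c hc u hu
    obtain ⟨hgbic, hvi, hvi2, hvi1⟩ := hg i h1 h2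
    obtain ⟨X, Y, -, -, hu1, hd1, hiff1, hviX, hvi1Y⟩ :=
      parts_of_adj hgbic.1 hvi hvi1 (hadj i (by omega))
    have h1' := hF1 u₀ hu₀ u hu
    rcases (hu1 ▸ hc : c ∈ X ∪ Y) with hcX | hcY
    · have hadjc : G.Adj c (v (i + 1)) := adj_cross hiff1 hc hvi1 hcX hvi1Y
      have ht1 := hG.dist_triangle (u := u₀) (v := c) (w := u)
      have ht2 := hG.dist_triangle (u := u₀) (v := v (i + 1)) (w := c)
      have ht3 := hdL (i + 1)
      have ht4 : G.dist (v (i + 1)) c = 1 := (SimpleGraph.dist_eq_one_iff_adj).mpr hadjc.symm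
      omega
    · have hadjc : G.Adj (v i) c := adj_cross hiff1 hvi hc hviX hcY
      have ht1 := hG.dist_triangle (u := u₀) (v := c) (w := u)
      have ht2 := hG.dist_triangle (u := u₀) (v := v i) (w := c)
      have ht3 := hdL i
      have ht4 : G.dist (v i) c = 1 := (SimpleGraph.dist_eq_one_iff_adj).mpr hadjc
      omega
  -- upper bounds for stars
  have hgup : ∀ i, 1 ≤ i → i ≤ j →
      bicliqueDist G (g i) B ≤ i ∧ bicliqueDist G (g i) B' ≤ j + 1 - i := by
    intro i h1 h2
    obtain ⟨hgbic, hvi, hvi2, hvi1⟩ := hg i h1 h2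
    constructor
    · refine le_trans (bicliqueDist_le hvi hu₀) ?_
      rw [SimpleGraph.dist_comm]
      exact hdL i
    · refine le_trans (bicliqueDist_le hvi2 hw₀) ?_
      have := hdR (i + 2)
      omega
  -- E/F family facts
  have hEfam : ∀ E : Set V, IsBiclique G E → v 1 ∈ E → (E ∩ B).Nonempty →
      (∃ x ∈ E, ∃ y ∈ E, G.Adj x y) →
      (E ≠ B ∧ E ≠ B' ∧ bicliqueDist G E B ≤ j + 3 - 1 ∧ bicliqueDist G E B' ≤ j + 3 - 1 ∧
        bicliqueDist G E B = 0 ∧ (∀ i, 1 ≤ i → i ≤ j → E ≠ g i)) := by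
    intro E hEbic hmE ⟨u, huE, huB⟩ hedge
    have hEB : bicliqueDist G E B = 0 :=
      Nat.le_zero.mp (le_trans (bicliqueDist_le huE huB) (by rw [SimpleGraph.dist_self]))
    have hEB' : bicliqueDist G E B' ≤ j + 2 := by
      refine le_trans (bicliqueDist_le hmE hw₀) ?_
      have := hdR 1
      omega
    refine ⟨?_, ?_, by omega, by omega, hEB, ?_⟩
    · rintro rfl
      rw [hk] at hEB'
      omega
    · rintro rfl
      have := hF1 u huB u huE
      rw [SimpleGraph.dist_self] at this
      omega
    · intro i h1 h2 heq
      have hlow : i ≤ bicliqueDist G (g i) B := by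
        obtain ⟨hgbic, hvi, hvi2, hvi1⟩ := hg i h1 h2
        exact le_bicliqueDist hvi huB (hglowB i h1 h2)
      rw [← heq, hEB] at hlow
      omega
  have hFfam : ∀ F : Set V, IsBiclique G F → v (j + 2) ∈ F → (F ∩ B').Nonempty →
      (∃ x ∈ F, ∃ y ∈ F, G.Adj x y) →
      (F ≠ B ∧ F ≠ B' ∧ bicliqueDist G F B ≤ j + 3 - 1 ∧ bicliqueDist G F B' ≤ j + 3 - 1 ∧
        bicliqueDist G F B' = 0 ∧ (∀ i, 1 ≤ i → i ≤ j → F ≠ g i)) := by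
    intro F hFbic hmF ⟨u, huF, huB'⟩ hedge
    have hFB' : bicliqueDist G F B' = 0 :=
      Nat.le_zero.mp (le_trans (bicliqueDist_le huF huB') (by rw [SimpleGraph.dist_self]))
    have hFB : bicliqueDist G F B ≤ j + 2 := by
      refine le_trans (bicliqueDist_le hmF hu₀) ?_
      rw [SimpleGraph.dist_comm]
      have := hdL (j + 2)
      omega
    refine ⟨?_, ?_, by omega, by omega, hFB', ?_⟩
    · rintro rfl
      have := hF1 u huF u huB'
      rw [SimpleGraph.dist_self] at this
      omega
    · intro heq
      have hlow : j + 3 ≤ bicliqueDist G F B := by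
        refine le_bicliqueDist huF hu₀ ?_
        intro p hp q hq
        rw [SimpleGraph.dist_comm]
        exact hF1 q hq p (heq ▸ hp)
      omega
    · intro i h1 h2 heq
      have hlow : j + 1 - i ≤ bicliqueDist G (g i) B' := by
        obtain ⟨hgbic, hvi, hvi2, hvi1⟩ := hg i h1 h2
        exact le_bicliqueDist hvi huB' (hglowB' i h1 h2)
      rw [← heq, hFB'] at hlow
      omega
  -- E vs F distinctness
  have hEFne : ∀ E F : Set V, IsBiclique G E → (E ∩ B).Nonempty →
      (∃ x ∈ E, ∃ y ∈ E, G.Adj x y) → (F ∩ B').Nonempty → E ≠ F := by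
    rintro E F hEbic ⟨u, huE, huB⟩ ⟨x, hxE, y, hyE, hxy⟩ ⟨u', hu'F, hu'B'⟩ heq
    subst heq
    have h1 := cb_dist_le_two hG hEbic.1 hxE hyE hxy huE hu'F
    have h2 := hF1 u huB u' hu'B'
    omega
  -- star injectivity facts
  have hstarne : ∀ i i', 1 ≤ i → i ≤ j → 1 ≤ i' → i' ≤ j → g i = g i' → i = i' := by
    intro i i' h1 h2 h1' h2' heq
    obtain ⟨hgbic, hvi, hvi2, hvi1⟩ := hg i h1 h2
    obtain ⟨hgbic', hvi', hvi2', hvi1'⟩ := hg i' h1' h2'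
    have hle : i' ≤ bicliqueDist G (g i') B := le_bicliqueDist hvi' hu₀ (hglowB i' h1' h2')
    have hge : bicliqueDist G (g i) B ≤ i := (hgup i h1 h2).1
    have hle2 : i ≤ bicliqueDist G (g i) B := le_bicliqueDist hvi hu₀ (hglowB i h1 h2)
    have hge2 : bicliqueDist G (g i') B ≤ i' := (hgup i' h1' h2').1
    rw [heq] at hge hle2
    omega
  -- assemble
  set img : Finset (Set V) := (Finset.Icc 1 j).image g with himg
  have hmem_img : ∀ C ∈ img, ∃ i, 1 ≤ i ∧ i ≤ j ∧ C = g i := by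
    intro C hC
    obtain ⟨i, hi, rfl⟩ := Finset.mem_image.mp hC
    rw [Finset.mem_Icc] at hi
    exact ⟨i, hi.1, hi.2, rfl⟩
  have hcard_img : img.card = j := by
    rw [himg, Finset.card_image_of_injOn, Nat.card_Icc]
    · omega
    · intro i hi i' hi' heq
      rw [Finset.mem_coe, Finset.mem_Icc] at hi hi'
      exact hstarne i i' hi.1 hi.2 hi'.1 hi'.2 heq
  obtain ⟨hE₁nB, hE₁nB', hE₁d, hE₁d', hE₁0, hE₁g⟩ :=
    hEfam E₁ hE₁ hmE₁ hE₁B ⟨xE₁, hxE₁, yE₁, hyE₁, hxyE₁⟩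
  obtain ⟨hE₂nB, hE₂nB', hE₂d, hE₂d', hE₂0, hE₂g⟩ :=
    hEfam E₂ hE₂ hmE₂ hE₂B ⟨xE₂, hxE₂, yE₂, hyE₂, hxyE₂⟩
  obtain ⟨hF₁nB, hF₁nB', hF₁d, hF₁d', hF₁0, hF₁g⟩ :=
    hFfam F₁ hF₁ hmF₁ hF₁B' ⟨xF₁, hxF₁, yF₁, hyF₁, hxyF₁⟩
  obtain ⟨hF₂nB, hF₂nB', hF₂d, hF₂d', hF₂0, hF₂g⟩ :=
    hFfam F₂ hF₂ hmF₂ hF₂B' ⟨xF₂, hxF₂, yF₂, hyF₂, hxyF₂⟩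
  have hE₁F₁ : E₁ ≠ F₁ := hEFne E₁ F₁ hE₁ hE₁B ⟨xE₁, hxE₁, yE₁, hyE₁, hxyE₁⟩ hF₁B'
  have hE₁F₂ : E₁ ≠ F₂ := hEFne E₁ F₂ hE₁ hE₁B ⟨xE₁, hxE₁, yE₁, hyE₁, hxyE₁⟩ hF₂B'
  have hE₂F₁ : E₂ ≠ F₁ := hEFne E₂ F₁ hE₂ hE₂B ⟨xE₂, hxE₂, yE₂, hyE₂, hxyE₂⟩ hF₁B'
  have hE₂F₂ : E₂ ≠ F₂ := hEFne E₂ F₂ hE₂ hE₂B ⟨xE₂, hxE₂, yE₂, hyE₂, hxyE₂⟩ hF₂B'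
  have hE₁img : E₁ ∉ img := by
    intro h
    obtain ⟨i, h1, h2, heq⟩ := hmem_img E₁ h
    exact hE₁g i h1 h2 heq
  have hE₂img : E₂ ∉ img := by
    intro h
    obtain ⟨i, h1, h2, heq⟩ := hmem_img E₂ h
    exact hE₂g i h1 h2 heq
  have hF₁img : F₁ ∉ img := by
    intro h
    obtain ⟨i, h1, h2, heq⟩ := hmem_img F₁ h
    exact hF₁g i h1 h2 heq
  have hF₂img : F₂ ∉ img := by
    intro h
    obtain ⟨i, h1, h2, heq⟩ := hmem_img F₂ h
    exact hF₂g i h1 h2 heq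
  refine ⟨insert E₁ (insert E₂ (insert F₁ (insert F₂ img))), ?_, ?_⟩
  · rw [Finset.card_insert_of_notMem (by simp [hEne, hE₁F₁, hE₁F₂, hE₁img]),
      Finset.card_insert_of_notMem (by simp [hE₂F₁, hE₂F₂, hE₂img]),
      Finset.card_insert_of_notMem (by simp [hFne, hF₁img]),
      Finset.card_insert_of_notMem hF₂img, hcard_img]
    try omega
  · intro C hC
    rcases Finset.mem_insert.mp hC with rfl | hC
    · exact ⟨hE₁, hE₁nB, hE₁nB', hE₁d, hE₁d'⟩
    rcases Finset.mem_insert.mp hC with rfl | hC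
    · exact ⟨hE₂, hE₂nB, hE₂nB', hE₂d, hE₂d'⟩
    rcases Finset.mem_insert.mp hC with rfl | hC
    · exact ⟨hF₁, hF₁nB, hF₁nB', hF₁d, hF₁d'⟩
    rcases Finset.mem_insert.mp hC with rfl | hC
    · exact ⟨hF₂, hF₂nB, hF₂nB', hF₂d, hF₂d'⟩
    obtain ⟨i, h1, h2, rfl⟩ := hmem_img C hC
    obtain ⟨hgbic, hvi, hvi2, hvi1⟩ := hg i h1 h2
    obtain ⟨hup1, hup2⟩ := hgup i h1 h2
    have hlow1 : i ≤ bicliqueDist G (g i) B := le_bicliqueDist hvi hu₀ (hglowB i h1 h2)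
    have hlow2 : j + 1 - i ≤ bicliqueDist G (g i) B' :=
      le_bicliqueDist hvi hw₀ (hglowB' i h1 h2)
    refine ⟨hgbic, ?_, ?_, by omega, by omega⟩
    · rintro heq
      rw [heq] at hlow1
      have : bicliqueDist G B B ≤ 0 :=
        le_trans (bicliqueDist_le hu₀ hu₀) (by rw [SimpleGraph.dist_self])
      omega
    · rintro heq
      rw [heq] at hlow2
      have : bicliqueDist G B' B' ≤ 0 :=
        le_trans (bicliqueDist_le hw₀ hw₀) (by rw [SimpleGraph.dist_self])
      omega
end

section
/- If G is an induced subgraph of H, then KB(G) is a subgraph (not necessarily induced) of KB(H); that is, there is an injective map from the bicliques of G to the bicliques of H that maps intersecting bicliques to intersecting bicliques. -/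
open SimpleGraph

variable {V : Type*}

lemma cb_image {W : Type*} (H : SimpleGraph W) (s : Set W) {S : Set s}
    (h : IsCompleteBipartiteSet (H.induce s) S) :
    IsCompleteBipartiteSet H (Subtype.val '' S) := by
  obtain ⟨X, Y, hX, hY, hS, hd, hadj⟩ := h
  refine ⟨Subtype.val '' X, Subtype.val '' Y, hX.image _, hY.image _, by rw [hS, Set.image_union],
    Set.disjoint_image_of_injective Subtype.val_injective hd, ?_⟩
  rintro _ ⟨a, ha, rfl⟩ _ ⟨b, hb, rfl⟩
  have := hadj a ha b hb
  simp only [SimpleGraph.comap_adj, Function.Embedding.coe_subtype] at this ⊢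
  rw [show (H.Adj a b) = (H.induce s).Adj a b from rfl] at *
  constructor
  · intro hab
    rcases this.1 hab with ⟨h1, h2⟩ | ⟨h1, h2⟩
    · exact Or.inl ⟨⟨a, h1, rfl⟩, ⟨b, h2, rfl⟩⟩
    · exact Or.inr ⟨⟨a, h1, rfl⟩, ⟨b, h2, rfl⟩⟩
  · rintro (⟨⟨a', h1, ha'⟩, ⟨b', h2, hb'⟩⟩ | ⟨⟨a', h1, ha'⟩, ⟨b', h2, hb'⟩⟩)
    · cases Subtype.val_injective ha'; cases Subtype.val_injective hb'
      exact this.2 (Or.inl ⟨h1, h2⟩)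
    · cases Subtype.val_injective ha'; cases Subtype.val_injective hb'
      exact this.2 (Or.inr ⟨h1, h2⟩)

lemma cb_preimage {W : Type*} (H : SimpleGraph W) (s : Set W) {T : Set W}
    (h : IsCompleteBipartiteSet H T)
    (he : ∃ a ∈ (Subtype.val ⁻¹' T : Set s), ∃ b ∈ (Subtype.val ⁻¹' T : Set s),
      (H.induce s).Adj a b) :
    IsCompleteBipartiteSet (H.induce s) (Subtype.val ⁻¹' T : Set s) := by
  obtain ⟨X, Y, hX, hY, hT, hd, hadj⟩ := h
  obtain ⟨p, hp, q, hq, hpq⟩ := he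
  have hpq' := (hadj p hp q hq).1 hpq
  refine ⟨Subtype.val ⁻¹' X, Subtype.val ⁻¹' Y, ?_, ?_, by rw [hT, Set.preimage_union],
    hd.preimage _, ?_⟩
  · rcases hpq' with ⟨h1, _⟩ | ⟨_, h2⟩
    · exact ⟨p, h1⟩
    · exact ⟨q, h2⟩
  · rcases hpq' with ⟨_, h2⟩ | ⟨h1, _⟩
    · exact ⟨q, h2⟩
    · exact ⟨p, h1⟩
  intro a ha b hb
  exact hadj a ha b hb

lemma exists_biclique_ext {W : Type*} [Fintype W] (H : SimpleGraph W) {S : Set W}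
    (h : IsCompleteBipartiteSet H S) : ∃ T, IsBiclique H T ∧ S ⊆ T := by
  classical
  have hfin : {T : Set W | IsCompleteBipartiteSet H T ∧ S ⊆ T}.Finite := Set.toFinite _
  obtain ⟨T, hT, hmax⟩ := Set.Finite.exists_maximalFor id _ hfin ⟨S, h, le_refl _⟩
  refine ⟨T, ⟨hT.1, ?_⟩, hT.2⟩
  intro T' hT' hsub
  exact le_antisymm (hmax ⟨hT', hT.2.trans hsub⟩ hsub) hsub

/-- If `G` is an induced subgraph of `H` (the subgraph of `H` induced by a vertex set
`s`), then `KB(G)` is a subgraph of `KB(H)`: there is an injective map from the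
bicliques of `G` to the bicliques of `H` carrying intersecting bicliques to
intersecting bicliques. -/
theorem KB_induce_subgraph
    {W : Type*} [Fintype W] (H : SimpleGraph W) (s : Set W) :
    ∃ f : {S : Set s // IsBiclique (H.induce s) S} → {S : Set W // IsBiclique H S},
      Function.Injective f ∧
        ∀ A B, (KB (H.induce s)).Adj A B → (KB H).Adj (f A) (f B) := by
  classical
  have key : ∀ A : {S : Set s // IsBiclique (H.induce s) S},
      ∃ T : Set W, IsBiclique H T ∧ Subtype.val '' A.1 ⊆ T := by
    intro A
    exact exists_biclique_ext H (cb_image H s A.2.1)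
  choose g hg1 hg2 using key
  have hrec : ∀ A, (Subtype.val ⁻¹' (g A) : Set s) = A.1 := by
    intro A
    apply A.2.2
    · obtain ⟨X', Y', ⟨x, hx⟩, ⟨y, hy⟩, hA, -, hadjA⟩ := A.2.1
      have hxA : x ∈ A.1 := by rw [hA]; exact Or.inl hx
      have hyA : y ∈ A.1 := by rw [hA]; exact Or.inr hy
      exact cb_preimage H s (hg1 A).1 ⟨x, hg2 A ⟨x, hxA, rfl⟩, y, hg2 A ⟨y, hyA, rfl⟩,
        (hadjA x hxA y hyA).2 (Or.inl ⟨hx, hy⟩)⟩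
    · intro x hx
      exact hg2 A ⟨x, hx, rfl⟩
  refine ⟨fun A => ⟨g A, hg1 A⟩, ?_, ?_⟩
  · intro A B hAB
    have : g A = g B := congrArg Subtype.val hAB
    apply Subtype.ext
    rw [← hrec A, ← hrec B, this]
  · rintro A B ⟨hne, x, hxA, hxB⟩
    refine ⟨?_, ⟨x, hg2 A ⟨x, hxA, rfl⟩, hg2 B ⟨x, hxB, rfl⟩⟩⟩
    intro h
    apply hne
    apply Subtype.ext
    rw [← hrec A, ← hrec B]
    have : g A = g B := congrArg Subtype.val h
    rw [this]
end
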